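/- arXiv:math/0308204 — 2 statements merged into one kernel-verified Lean document; each statement's English description precedes it below -/
import Mathlib

section
/- Let M ⊆ ℝ^{n+1} be a Lebesgue-measurable set that is directed with respect to v ∈ ℝ^{n+1} \ {0}, and let x₀ ∈ ∂M (measure-theoretic boundary). Then exactly one of the following two possibilities occurs: (1) there exists t ≠ 0 with x₀ + t·v ∈ ∂M; (2) for all t > 0, x₀ + t·v ∈ ∁_μM and x₀ − t·v ∈ M_μ. -/
open MeasureTheory Metric

/-- Approximate density of a set `M` at `x` with respect to radius `ρ`. -/
noncomputable def approxDensity {d : ℕ} (M : Set (EuclideanSpace ℝ (Fin d))) (ρ : ℝ)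
    (x : EuclideanSpace ℝ (Fin d)) : ENNReal :=
  volume (M ∩ ball x ρ) / volume (ball x ρ)

/-- `M` is directed with respect to `v`. -/
def DirectedWrt {d : ℕ} (M : Set (EuclideanSpace ℝ (Fin d)))
    (v : EuclideanSpace ℝ (Fin d)) : Prop :=
  ∀ x : EuclideanSpace ℝ (Fin d), ∀ ρ : ℝ, 0 < ρ →
    Antitone (fun t : ℝ => approxDensity M ρ (x + t • v))

/-- Measure-theoretic interior. -/
def mInterior {d : ℕ} (M : Set (EuclideanSpace ℝ (Fin d))) :
    Set (EuclideanSpace ℝ (Fin d)) :=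
  {x | ∃ ρ > (0 : ℝ), volume (ball x ρ \ M) = 0}

/-- Measure-theoretic exterior. -/
def mExterior {d : ℕ} (M : Set (EuclideanSpace ℝ (Fin d))) :
    Set (EuclideanSpace ℝ (Fin d)) :=
  {x | ∃ ρ > (0 : ℝ), volume (M ∩ ball x ρ) = 0}

/-- Measure-theoretic boundary. -/
def mBoundary {d : ℕ} (M : Set (EuclideanSpace ℝ (Fin d))) :
    Set (EuclideanSpace ℝ (Fin d)) :=
  (mInterior M ∪ mExterior M)ᶜ

/-
Along the direction `v` the density of a directed set can only decrease, so a null-complement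
ball ahead of `x₀` would put `x₀` in the measure-theoretic interior, and a null ball behind it
would put `x₀` in the exterior. Hence the open ray ahead of a boundary point avoids the
interior and the ray behind it avoids the exterior; if the line through `x₀` meets the boundary
nowhere else, the two rays must therefore lie in the exterior and in the interior respectively.
-/

section Density

variable {d : ℕ} {M : Set (EuclideanSpace ℝ (Fin d))} {ρ : ℝ}

lemma approxDensity_le_one (x : EuclideanSpace ℝ (Fin d)) : approxDensity M ρ x ≤ 1 :=
  ENNReal.div_le_of_le_mul (by rw [one_mul]; exact measure_mono Set.inter_subset_right)

lemma approxDensity_eq_one_iff (hM : MeasurableSet M) (hρ : 0 < ρ)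
    (x : EuclideanSpace ℝ (Fin d)) :
    approxDensity M ρ x = 1 ↔ volume (ball x ρ \ M) = 0 := by
  have hfin : volume (ball x ρ) ≠ ⊤ := measure_ball_lt_top.ne
  have hsplit : volume (ball x ρ ∩ M) + volume (ball x ρ \ M) = volume (ball x ρ) :=
    measure_inter_add_sdiff _ hM
  rw [approxDensity, ENNReal.div_eq_one_iff (measure_ball_pos _ _ hρ).ne' hfin, Set.inter_comm]
  constructor
  · intro h
    rw [h] at hsplit
    exact (ENNReal.add_right_inj hfin).mp (hsplit.trans (add_zero _).symm)
  · intro h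
    rwa [h, add_zero] at hsplit

lemma approxDensity_eq_zero_iff (x : EuclideanSpace ℝ (Fin d)) :
    approxDensity M ρ x = 0 ↔ volume (M ∩ ball x ρ) = 0 := by
  simp [approxDensity, ENNReal.div_eq_zero_iff, measure_ball_lt_top.ne]

end Density

lemma mem_mBoundary_iff {d : ℕ} {M : Set (EuclideanSpace ℝ (Fin d))}
    {x : EuclideanSpace ℝ (Fin d)} : x ∈ mBoundary M ↔ x ∉ mInterior M ∧ x ∉ mExterior M := by
  simp [mBoundary]

namespace DirectedWrt

variable {d : ℕ} {M : Set (EuclideanSpace ℝ (Fin d))} {v x : EuclideanSpace ℝ (Fin d)}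
  {s t : ℝ}

lemma mem_mInterior_of_le (hdir : DirectedWrt M v) (hM : MeasurableSet M) (hst : s ≤ t)
    (ht : x + t • v ∈ mInterior M) : x + s • v ∈ mInterior M := by
  obtain ⟨ρ, hρ, hnull⟩ := ht
  refine ⟨ρ, hρ, (approxDensity_eq_one_iff hM hρ _).mp ?_⟩
  have hone := (approxDensity_eq_one_iff hM hρ _).mpr hnull
  exact le_antisymm (approxDensity_le_one _) (hone ▸ hdir x ρ hρ hst)

lemma mem_mExterior_of_le (hdir : DirectedWrt M v) (hst : s ≤ t)
    (hs : x + s • v ∈ mExterior M) : x + t • v ∈ mExterior M := by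
  obtain ⟨ρ, hρ, hnull⟩ := hs
  refine ⟨ρ, hρ, (approxDensity_eq_zero_iff _).mp ?_⟩
  have hzero := (approxDensity_eq_zero_iff _).mpr hnull
  exact le_antisymm (hzero ▸ hdir x ρ hρ hst) zero_le

end DirectedWrt

theorem boundary_point_dichotomy_general {n : ℕ}
    (M : Set (EuclideanSpace ℝ (Fin (n + 1)))) (hM : MeasurableSet M)
    (v : EuclideanSpace ℝ (Fin (n + 1)))
    (hdir : DirectedWrt M v)
    (x₀ : EuclideanSpace ℝ (Fin (n + 1))) (hx₀ : x₀ ∈ mBoundary M) :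
    Xor' (∃ t : ℝ, t ≠ 0 ∧ x₀ + t • v ∈ mBoundary M)
      (∀ t : ℝ, 0 < t → x₀ + t • v ∈ mExterior M ∧ x₀ - t • v ∈ mInterior M) := by
  have hx₀' : x₀ + (0 : ℝ) • v ∈ mBoundary M := by rwa [zero_smul, add_zero]
  have hahead (t : ℝ) (ht : 0 < t) : x₀ + t • v ∉ mInterior M := fun h =>
    (mem_mBoundary_iff.mp hx₀').1 (hdir.mem_mInterior_of_le hM ht.le h)
  have hbehind (t : ℝ) (ht : t < 0) : x₀ + t • v ∉ mExterior M := fun h =>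
    (mem_mBoundary_iff.mp hx₀').2 (hdir.mem_mExterior_of_le ht.le h)
  have hsub (t : ℝ) : x₀ - t • v = x₀ + (-t) • v := by rw [neg_smul, sub_eq_add_neg]
  refine xor_iff_not_iff'.mpr ⟨fun hA t ht => ?_, fun hB ⟨t, ht, hbd⟩ => ?_⟩
  · push Not at hA
    have hfwd := hA t ht.ne'
    have hbwd := hA (-t) (neg_ne_zero.mpr ht.ne')
    rw [mem_mBoundary_iff, not_and_or, not_not, not_not] at hfwd hbwd
    exact ⟨hfwd.resolve_left (hahead t ht),
      hsub t ▸ hbwd.resolve_right (hbehind (-t) (neg_neg_of_pos ht))⟩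
  · rcases ht.lt_or_gt with hneg | hpos
    · exact (mem_mBoundary_iff.mp hbd).1 (by simpa [hsub] using (hB (-t) (neg_pos.mpr hneg)).2)
    · exact (mem_mBoundary_iff.mp hbd).2 (hB t hpos).1

theorem boundary_point_dichotomy {n : ℕ}
    (M : Set (EuclideanSpace ℝ (Fin (n + 1)))) (hM : MeasurableSet M)
    (v : EuclideanSpace ℝ (Fin (n + 1))) (hv : v ≠ 0)
    (hdir : DirectedWrt M v)
    (x₀ : EuclideanSpace ℝ (Fin (n + 1))) (hx₀ : x₀ ∈ mBoundary M) :
    Xor' (∃ t : ℝ, t ≠ 0 ∧ x₀ + t • v ∈ mBoundary M)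
      (∀ t : ℝ, 0 < t → x₀ + t • v ∈ mExterior M ∧ x₀ - t • v ∈ mInterior M) :=
  boundary_point_dichotomy_general M hM v hdir x₀ hx₀
end

section
/- Let M ⊆ ℝ^{n+1} be a Lebesgue-measurable set whose measure-theoretic boundary ∂M has Lebesgue measure zero. Then the following are equivalent: (i) there exists a measurable function u : ℝ^n → [−∞,+∞] such that M coincides with the subgraph sub u up to a set of Lebesgue measure zero; (ii) M is directed with respect to e_{n+1}. Moreover, in case (ii) one may take u(x̂) := sup{t ∈ ℝ : (x̂,t) ∈ M_μ}. -/
/-!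
Because `∂M` is null, `M` agrees almost everywhere with its measure-theoretic interior `M_μ`,
which is open. Densities do not see null sets, and a subgraph shrinks when translated upwards,
so sets that are a.e. subgraphs are directed. Conversely, if `M` is directed then density one
propagates downwards, so every vertical slice of `M_μ` is a down-set; an open set with this
property is exactly the subgraph of its slice supremum `u`, and `u` is lower semicontinuous,
hence measurable.
-/

open MeasureTheory Metric

/-- The subgraph of an extended-real-valued function on `ℝⁿ`, as a subset of `ℝⁿ⁺¹`. -/
def subgraph {n : ℕ} (φ : EuclideanSpace ℝ (Fin n) → EReal) :
    Set (EuclideanSpace ℝ (Fin (n + 1))) :=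
  {x | (x (Fin.last n) : EReal) < φ (WithLp.toLp 2 (fun i : Fin n => x i.castSucc))}

/-- The point of `ℝⁿ⁺¹` with base point `xhat ∈ ℝⁿ` and last coordinate `t`. -/
def pairPoint {n : ℕ} (xhat : EuclideanSpace ℝ (Fin n)) (t : ℝ) :
    EuclideanSpace ℝ (Fin (n + 1)) :=
  WithLp.toLp 2 (Fin.snoc xhat.ofLp t)

open Filter Set Topology

section MeasureTheoreticInterior

variable {d : ℕ}

theorem isOpen_mInterior (M : Set (EuclideanSpace ℝ (Fin d))) : IsOpen (mInterior M) := by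
  refine Metric.isOpen_iff.2 fun x ⟨ρ, hρ, hx⟩ => ⟨ρ, hρ, fun y hy => ?_⟩
  refine ⟨ρ - dist y x, sub_pos.2 hy, measure_mono_null (sdiff_subset_sdiff_left ?_) hx⟩
  exact ball_subset_ball' (by linarith)

theorem volume_inter_mExterior (M : Set (EuclideanSpace ℝ (Fin d))) :
    volume (M ∩ mExterior M) = 0 :=
  measure_null_of_locally_null _ fun x ⟨_, ρ, hρ, hx⟩ =>
    ⟨M ∩ mExterior M ∩ ball x ρ, inter_mem_nhdsWithin _ (ball_mem_nhds x hρ),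
      measure_mono_null (inter_subset_inter_left _ inter_subset_left) hx⟩

theorem volume_mInterior_diff (M : Set (EuclideanSpace ℝ (Fin d))) :
    volume (mInterior M \ M) = 0 :=
  measure_null_of_locally_null _ fun x ⟨⟨ρ, hρ, hx⟩, _⟩ =>
    ⟨(mInterior M \ M) ∩ ball x ρ, inter_mem_nhdsWithin _ (ball_mem_nhds x hρ),
      measure_mono_null (t := ball x ρ \ M) (fun _ hy => ⟨hy.2, hy.1.2⟩) hx⟩

theorem ae_eq_mInterior {M : Set (EuclideanSpace ℝ (Fin d))}
    (hbdry : volume (mBoundary M) = 0) : M =ᵐ[volume] mInterior M := by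
  refine measure_symmDiff_eq_zero_iff.1 <| measure_mono_null (fun y hy => ?_) <|
    measure_union_null (measure_union_null (volume_inter_mExterior M)
      (volume_mInterior_diff M)) hbdry
  rcases mem_symmDiff.1 hy with ⟨hyM, hyI⟩ | hy
  · by_cases hyE : y ∈ mExterior M
    · exact Or.inl (Or.inl ⟨hyM, hyE⟩)
    · exact Or.inr fun h => h.elim hyI hyE
  · exact Or.inl (Or.inr hy)

end MeasureTheoreticInterior

section ApproxDensity

variable {d : ℕ} {A B : Set (EuclideanSpace ℝ (Fin d))} {v : EuclideanSpace ℝ (Fin d)}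

theorem approxDensity_congr_ae (h : A =ᵐ[volume] B) (ρ : ℝ) (x : EuclideanSpace ℝ (Fin d)) :
    approxDensity A ρ x = approxDensity B ρ x := by
  rw [approxDensity, approxDensity,
    measure_congr (h.inter (EventuallyEq.refl _ (ball x ρ)))]

theorem approxDensity_mono (h : A ⊆ B) (ρ : ℝ) (x : EuclideanSpace ℝ (Fin d)) :
    approxDensity A ρ x ≤ approxDensity B ρ x :=
  ENNReal.div_le_div_right (measure_mono (inter_subset_inter_left _ h)) _

theorem approxDensity_add (A : Set (EuclideanSpace ℝ (Fin d))) (ρ : ℝ)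
    (x c : EuclideanSpace ℝ (Fin d)) :
    approxDensity A ρ (x + c) = approxDensity ((· + c) ⁻¹' A) ρ x := by
  rw [approxDensity, approxDensity, ← measure_preimage_add_right volume c, preimage_inter,
    ← measure_preimage_add_right volume c (ball (x + c) ρ), Metric.preimage_add_right_ball,
    add_sub_cancel_right]

theorem one_le_approxDensity_iff (hA : NullMeasurableSet A) {ρ : ℝ} (hρ : 0 < ρ)
    (x : EuclideanSpace ℝ (Fin d)) :
    1 ≤ approxDensity A ρ x ↔ volume (ball x ρ \ A) = 0 := by
  have hfin : volume (ball x ρ) ≠ ⊤ := measure_ball_lt_top.ne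
  have hsplit := measure_inter_add_sdiff₀ (ball x ρ) hA
  rw [approxDensity, ENNReal.le_div_iff_mul_le (Or.inl (measure_ball_pos _ _ hρ).ne')
    (Or.inl hfin), one_mul, inter_comm]
  constructor
  · intro h
    rw [le_antisymm (measure_mono inter_subset_left) h] at hsplit
    exact (ENNReal.add_right_inj hfin).1 (hsplit.trans (add_zero _).symm)
  · intro h
    rw [h, add_zero] at hsplit
    exact hsplit.ge

theorem DirectedWrt.congr_ae (hB : DirectedWrt B v) (h : A =ᵐ[volume] B) : DirectedWrt A v :=
  fun x ρ hρ _ _ hst => by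
    simpa only [approxDensity_congr_ae h] using hB x ρ hρ hst

theorem DirectedWrt.add_smul_mem_mInterior (hdir : DirectedWrt A v) (hA : NullMeasurableSet A)
    {x : EuclideanSpace ℝ (Fin d)} {s t : ℝ} (hst : s ≤ t) (ht : x + t • v ∈ mInterior A) :
    x + s • v ∈ mInterior A := by
  obtain ⟨ρ, hρ, hnull⟩ := ht
  refine ⟨ρ, hρ, (one_le_approxDensity_iff hA hρ _).1 ?_⟩
  exact ((one_le_approxDensity_iff hA hρ _).2 hnull).trans (hdir x ρ hρ hst)

end ApproxDensity

section Subgraph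

variable {n : ℕ}

@[simp]
theorem pairPoint_last (xhat : EuclideanSpace ℝ (Fin n)) (t : ℝ) :
    pairPoint xhat t (Fin.last n) = t := by
  simp [pairPoint]

@[simp]
theorem pairPoint_castSucc (xhat : EuclideanSpace ℝ (Fin n)) (t : ℝ) (i : Fin n) :
    pairPoint xhat t i.castSucc = xhat i := by
  simp [pairPoint]

theorem pairPoint_surjective (x : EuclideanSpace ℝ (Fin (n + 1))) :
    ∃ xhat t, pairPoint xhat t = x :=
  ⟨WithLp.toLp 2 fun i => x i.castSucc, x (Fin.last n), by
    rw [pairPoint, ← Fin.init_def, Fin.snoc_init_self]⟩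

theorem continuous_pairPoint :
    Continuous fun p : EuclideanSpace ℝ (Fin n) × ℝ => pairPoint p.1 p.2 :=
  (PiLp.continuous_toLp 2 _).comp
    (((PiLp.continuous_ofLp 2 fun _ : Fin n => ℝ).comp continuous_fst).finSnoc (A := fun _ => ℝ)
      continuous_snd)

theorem pairPoint_add_smul_single (xhat : EuclideanSpace ℝ (Fin n)) (t s : ℝ) :
    pairPoint xhat t + s • EuclideanSpace.single (Fin.last n) 1 = pairPoint xhat (t + s) := by
  ext i
  induction i using Fin.lastCases <;>
    simp [(Fin.castSucc_lt_last _).ne]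

theorem mem_subgraph_pairPoint {φ : EuclideanSpace ℝ (Fin n) → EReal}
    {xhat : EuclideanSpace ℝ (Fin n)} {t : ℝ} :
    pairPoint xhat t ∈ subgraph φ ↔ (t : EReal) < φ xhat := by
  simp [subgraph]

theorem directedWrt_subgraph (φ : EuclideanSpace ℝ (Fin n) → EReal) :
    DirectedWrt (subgraph φ) (EuclideanSpace.single (Fin.last n) 1) := by
  intro x ρ _ s t hst
  simp only [approxDensity_add]
  refine approxDensity_mono (fun y hy => ?_) ρ x
  obtain ⟨yhat, r, rfl⟩ := pairPoint_surjective y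
  simp only [mem_preimage, pairPoint_add_smul_single, mem_subgraph_pairPoint] at hy ⊢
  exact lt_of_le_of_lt (EReal.coe_le_coe_iff.2 (by linarith)) hy

end Subgraph

section SliceSup

variable {n : ℕ} {S : Set (EuclideanSpace ℝ (Fin (n + 1)))}

noncomputable def sliceSup (S : Set (EuclideanSpace ℝ (Fin (n + 1))))
    (xhat : EuclideanSpace ℝ (Fin n)) : EReal :=
  sSup ((fun t : ℝ => (t : EReal)) '' {t : ℝ | pairPoint xhat t ∈ S})

theorem lt_sliceSup_iff {xhat : EuclideanSpace ℝ (Fin n)} {a : EReal} :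
    a < sliceSup S xhat ↔ ∃ t : ℝ, pairPoint xhat t ∈ S ∧ a < t := by
  simp [sliceSup, lt_sSup_iff]

theorem lowerSemicontinuous_sliceSup (hS : IsOpen S) : LowerSemicontinuous (sliceSup S) := by
  intro xhat a ha
  obtain ⟨t, ht, hat⟩ := lt_sliceSup_iff.1 ha
  have hnhds : ∀ᶠ yhat in 𝓝 xhat, pairPoint yhat t ∈ S :=
    (continuous_pairPoint.comp (continuous_id.prodMk continuous_const)).continuousAt
      |>.preimage_mem_nhds (hS.mem_nhds ht)
  exact hnhds.mono fun yhat hy => lt_sliceSup_iff.2 ⟨t, hy, hat⟩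

theorem subgraph_sliceSup (hS : IsOpen S)
    (hdown : ∀ xhat s t, s ≤ t → pairPoint xhat t ∈ S → pairPoint xhat s ∈ S) :
    subgraph (sliceSup S) = S := by
  ext x
  obtain ⟨xhat, t, rfl⟩ := pairPoint_surjective x
  rw [mem_subgraph_pairPoint, lt_sliceSup_iff]
  constructor
  · rintro ⟨r, hr, htr⟩
    exact hdown xhat t r (EReal.coe_lt_coe_iff.1 htr).le hr
  · intro ht
    -- openness of `S` is what makes the supremum strictly larger than `t`
    have hnhds : ∀ᶠ r in 𝓝 t, pairPoint xhat r ∈ S :=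
      (continuous_pairPoint.comp (continuous_const.prodMk continuous_id)).continuousAt
        |>.preimage_mem_nhds (hS.mem_nhds ht)
    obtain ⟨r, hr, htr⟩ :=
      ((hnhds.filter_mono nhdsWithin_le_nhds).and self_mem_nhdsWithin).exists (f := 𝓝[>] t)
    exact ⟨r, hr, EReal.coe_lt_coe_iff.2 htr⟩

end SliceSup

theorem subgraph_iff_directed_general {n : ℕ}
    (M : Set (EuclideanSpace ℝ (Fin (n + 1))))
    (hbdry : volume (mBoundary M) = 0) :
    ((∃ u : EuclideanSpace ℝ (Fin n) → EReal,
        Measurable u ∧ volume (symmDiff M (subgraph u)) = 0) ↔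
      DirectedWrt M (EuclideanSpace.single (Fin.last n) 1)) ∧
    (DirectedWrt M (EuclideanSpace.single (Fin.last n) 1) →
      Measurable (fun xhat : EuclideanSpace ℝ (Fin n) =>
        sSup ((fun t : ℝ => (t : EReal)) '' {t : ℝ | pairPoint xhat t ∈ mInterior M})) ∧
      volume (symmDiff M (subgraph (fun xhat =>
        sSup ((fun t : ℝ => (t : EReal)) '' {t : ℝ | pairPoint xhat t ∈ mInterior M})))) = 0) := by
  have hae : M =ᵐ[volume] mInterior M := ae_eq_mInterior hbdry
  have hM : NullMeasurableSet M volume :=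
    (isOpen_mInterior M).measurableSet.nullMeasurableSet.congr hae.symm
  have hprofile : DirectedWrt M (EuclideanSpace.single (Fin.last n) 1) →
      Measurable (sliceSup (mInterior M)) ∧
        volume (symmDiff M (subgraph (sliceSup (mInterior M)))) = 0 := by
    intro hdir
    have hdown : ∀ xhat s t, s ≤ t → pairPoint xhat t ∈ mInterior M →
        pairPoint xhat s ∈ mInterior M := fun xhat s t hst ht => by
      simpa only [pairPoint_add_smul_single, zero_add] using
        hdir.add_smul_mem_mInterior (x := pairPoint xhat 0) hM hst
          (by rwa [pairPoint_add_smul_single, zero_add])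
    refine ⟨(lowerSemicontinuous_sliceSup (isOpen_mInterior M)).measurable, ?_⟩
    rw [subgraph_sliceSup (isOpen_mInterior M) hdown]
    exact measure_symmDiff_eq_zero_iff.2 hae
  refine ⟨⟨fun ⟨u, _, hu⟩ => ?_, fun hdir => ⟨_, hprofile hdir⟩⟩, hprofile⟩
  exact (directedWrt_subgraph u).congr_ae (measure_symmDiff_eq_zero_iff.1 hu)

theorem subgraph_iff_directed {n : ℕ}
    (M : Set (EuclideanSpace ℝ (Fin (n + 1)))) (hM : MeasurableSet M)
    (hbdry : volume (mBoundary M) = 0) :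
    ((∃ u : EuclideanSpace ℝ (Fin n) → EReal,
        Measurable u ∧ volume (symmDiff M (subgraph u)) = 0) ↔
      DirectedWrt M (EuclideanSpace.single (Fin.last n) 1)) ∧
    (DirectedWrt M (EuclideanSpace.single (Fin.last n) 1) →
      Measurable (fun xhat : EuclideanSpace ℝ (Fin n) =>
        sSup ((fun t : ℝ => (t : EReal)) '' {t : ℝ | pairPoint xhat t ∈ mInterior M})) ∧
      volume (symmDiff M (subgraph (fun xhat =>
        sSup ((fun t : ℝ => (t : EReal)) '' {t : ℝ | pairPoint xhat t ∈ mInterior M})))) = 0) :=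
  subgraph_iff_directed_general M hbdry
end
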